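/- arXiv:1203.4956 — 2 statements merged into one kernel-verified Lean document; each statement's English description precedes it below -/
import Mathlib

section
/- Let n ≥ 2 be an integer. The map (1/(n-1))·τₙ : Mₙ(ℂ) → Mₙ(ℂ), where τₙ is the transpose map, is (n-1)-contractive but not n-contractive. -/
open scoped Kronecker
open Matrix
open scoped Matrix.Norms.L2Operator

noncomputable section

/-!
The amplification `τₙ ⊗ id_k` is the partial transpose, which transposes every `n × n` block
`X_pq` of `X ∈ Mₙ(M_k)` in place. Splitting the block positions `(p, q)` along the `k` cyclic
diagonals `q = p + d`, each piece is a block permutation of transposed blocks of `X`, so it has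
norm at most `‖X‖`; hence `‖(τₙ ⊗ id_k) X‖ ≤ k ‖X‖`, which for `k = n - 1` is the
`(n-1)`-contractivity of `τₙ / (n - 1)`. For `k = n`, the swap `a ⊗ b ↦ b ⊗ a` has norm `1`, but
its partial transpose is the rank-one matrix `ω ω*` for `ω = ∑ᵢ eᵢ ⊗ eᵢ`, of norm `‖ω‖² = n`, and
`n / (n - 1) > 1`.
-/

/-- The transpose map `τₙ : Mₙ(ℂ) → Mₙ(ℂ)` as a `ℂ`-linear map. -/
def transposeLM (n : ℕ) : Matrix (Fin n) (Fin n) ℂ →ₗ[ℂ] Matrix (Fin n) (Fin n) ℂ where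
  toFun := Matrix.transpose
  map_add' := Matrix.transpose_add
  map_smul' c A := Matrix.transpose_smul c A

/-- `T` is the amplification `φ ⊗ id_{M_k}` of `φ`, under the Kronecker identification
`Mₙ(ℂ) ⊗ M_k(ℂ) ≅ M_{nk}(ℂ)`. -/
def IsAmplification {n : ℕ} (φ : Matrix (Fin n) (Fin n) ℂ →ₗ[ℂ] Matrix (Fin n) (Fin n) ℂ)
    (k : ℕ) (T : Matrix (Fin n × Fin k) (Fin n × Fin k) ℂ →ₗ[ℂ]
                 Matrix (Fin n × Fin k) (Fin n × Fin k) ℂ) : Prop :=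
  ∀ (A : Matrix (Fin n) (Fin n) ℂ) (B : Matrix (Fin k) (Fin k) ℂ), T (A ⊗ₖ B) = (φ A) ⊗ₖ B

/-- `φ : Mₙ(ℂ) → Mₙ(ℂ)` is `k`-contractive: its amplification `φ ⊗ id_{M_k}` has norm
at most `1`, with respect to the operator (C*-) norms on matrices. -/
def KContractiveMat {n : ℕ} (k : ℕ)
    (φ : Matrix (Fin n) (Fin n) ℂ →ₗ[ℂ] Matrix (Fin n) (Fin n) ℂ) : Prop :=
  ∀ T, IsAmplification φ k T → ∀ X, ‖T X‖ ≤ ‖X‖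

namespace Matrix

section L2OpNorm

variable {𝕜 : Type*} [RCLike 𝕜] {l m n o : Type*} [Fintype l] [Fintype m] [Fintype n] [Fintype o]
  [DecidableEq n]

lemma sum_norm_sq_mulVec_le (A : Matrix m n 𝕜) (v : n → 𝕜) :
    ∑ i, ‖(A *ᵥ v) i‖ ^ 2 ≤ ‖A‖ ^ 2 * ∑ j, ‖v j‖ ^ 2 := by
  have h := pow_le_pow_left₀ (norm_nonneg _) (l2_opNorm_mulVec A (WithLp.toLp 2 v)) 2
  rwa [mul_pow, EuclideanSpace.norm_sq_eq, EuclideanSpace.norm_sq_eq] at h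

lemma l2_opNorm_le_of_sum_norm_sq_mulVec_le {A : Matrix m n 𝕜} {c : ℝ} (hc : 0 ≤ c)
    (h : ∀ v, ∑ i, ‖(A *ᵥ v) i‖ ^ 2 ≤ c ^ 2 * ∑ j, ‖v j‖ ^ 2) : ‖A‖ ≤ c := by
  rw [l2_opNorm_def]
  refine ContinuousLinearMap.opNorm_le_bound _ hc fun x => ?_
  refine (sq_le_sq₀ (norm_nonneg _) (by positivity)).mp ?_
  rw [mul_pow, EuclideanSpace.norm_sq_eq, EuclideanSpace.norm_sq_eq]
  exact h x.ofLp

lemma norm_le_l2_opNorm_of_mulVec_eq_smul {A : Matrix n n 𝕜} {v : n → 𝕜} (hv : v ≠ 0) {c : 𝕜}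
    (h : A *ᵥ v = c • v) : ‖c‖ ≤ ‖A‖ := by
  have hA := l2_opNorm_mulVec A (WithLp.toLp 2 v)
  have hpos : 0 < ‖WithLp.toLp 2 v‖ := norm_pos_iff.mpr (by simpa using hv)
  have : (EuclideanSpace.equiv n 𝕜).symm (A *ᵥ WithLp.toLp 2 v) = c • WithLp.toLp 2 v := by
    simp [h]
  rw [this, norm_smul] at hA
  exact le_of_mul_le_mul_right hA hpos

lemma l2_opNorm_transpose_le [DecidableEq m] (A : Matrix m n 𝕜) : ‖Aᵀ‖ ≤ ‖A‖ := by
  refine l2_opNorm_le_of_sum_norm_sq_mulVec_le (norm_nonneg _) fun v => ?_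
  have hconj : Aᵀ *ᵥ v = star (Aᴴ *ᵥ star v) := by
    rw [star_mulVec, star_star, conjTranspose_conjTranspose, mulVec_transpose]
  simpa [hconj, l2_opNorm_conjTranspose] using sum_norm_sq_mulVec_le Aᴴ (star v)

lemma l2_opNorm_transpose [DecidableEq m] (A : Matrix m n 𝕜) : ‖Aᵀ‖ = ‖A‖ :=
  (l2_opNorm_transpose_le A).antisymm (by simpa using l2_opNorm_transpose_le Aᵀ)

lemma l2_opNorm_submatrix_left_le (A : Matrix m n 𝕜) {e : l → m} (he : e.Injective) :
    ‖A.submatrix e id‖ ≤ ‖A‖ := by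
  refine l2_opNorm_le_of_sum_norm_sq_mulVec_le (norm_nonneg _) fun v => ?_
  calc ∑ a, ‖(A.submatrix e id *ᵥ v) a‖ ^ 2
      = ∑ i ∈ Finset.univ.map ⟨e, he⟩, ‖(A *ᵥ v) i‖ ^ 2 := by
        simp [mulVec, dotProduct]
    _ ≤ ∑ i, ‖(A *ᵥ v) i‖ ^ 2 := Finset.sum_le_univ_sum_of_nonneg fun _ => by positivity
    _ ≤ ‖A‖ ^ 2 * ∑ j, ‖v j‖ ^ 2 := sum_norm_sq_mulVec_le A v

lemma l2_opNorm_submatrix_le [DecidableEq l] [DecidableEq m] [DecidableEq o] (A : Matrix m n 𝕜)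
    {e : l → m} {f : o → n} (he : e.Injective) (hf : f.Injective) :
    ‖A.submatrix e f‖ ≤ ‖A‖ :=
  calc ‖A.submatrix e f‖ = ‖((A.submatrix e id)ᵀ.submatrix f id)ᵀ‖ := rfl
    _ = ‖(A.submatrix e id)ᵀ.submatrix f id‖ := l2_opNorm_transpose _
    _ ≤ ‖(A.submatrix e id)ᵀ‖ := l2_opNorm_submatrix_left_le _ hf
    _ = ‖A.submatrix e id‖ := l2_opNorm_transpose _
    _ ≤ ‖A‖ := l2_opNorm_submatrix_left_le A he

lemma l2_opNorm_one_le : ‖(1 : Matrix n n 𝕜)‖ ≤ 1 := by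
  rw [← diagonal_one, l2_opNorm_diagonal]
  simpa using pi_norm_const_le (ι := n) (1 : 𝕜)

end L2OpNorm

section PartialTranspose

variable {𝕜 R ι κ : Type*} [RCLike 𝕜]

def partialTranspose [Semiring R] : Matrix (ι × κ) (ι × κ) R →ₗ[R] Matrix (ι × κ) (ι × κ) R where
  toFun X := of fun ip jq => X (jq.1, ip.2) (ip.1, jq.2)
  map_add' _ _ := rfl
  map_smul' _ _ := rfl

@[simp]
lemma partialTranspose_apply [Semiring R] (X : Matrix (ι × κ) (ι × κ) R) (i j : ι) (p q : κ) :
    partialTranspose X (i, p) (j, q) = X (j, p) (i, q) :=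
  rfl

lemma partialTranspose_kronecker [Semiring R] (A : Matrix ι ι R) (B : Matrix κ κ R) :
    partialTranspose (A ⊗ₖ B) = Aᵀ ⊗ₖ B :=
  rfl

lemma linearMap_ext_kronecker [CommSemiring R] [Finite ι] [Finite κ] {M : Type*}
    [AddCommMonoid M] [Module R M] {f g : Matrix (ι × κ) (ι × κ) R →ₗ[R] M}
    (h : ∀ A B, f (A ⊗ₖ B) = g (A ⊗ₖ B)) : f = g := by
  classical
  refine ext_linearMap R fun ip jq => LinearMap.ext_ring ?_
  simpa [single_kronecker_single] using h (single ip.1 jq.1 1) (single ip.2 jq.2 1)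

def partialTransposeAlong [Zero R] [DecidableEq κ] (σ : Equiv.Perm κ)
    (X : Matrix (ι × κ) (ι × κ) R) : Matrix (ι × κ) (ι × κ) R :=
  of fun ip jq => if jq.2 = σ ip.2 then X (jq.1, ip.2) (ip.1, jq.2) else 0

lemma partialTransposeAlong_mulVec [Fintype ι] [Fintype κ] [DecidableEq κ] [Semiring R]
    (σ : Equiv.Perm κ) (X : Matrix (ι × κ) (ι × κ) R) (v : ι × κ → R) (i : ι) (p : κ) :
    (partialTransposeAlong σ X *ᵥ v) (i, p) =
      ((X.submatrix (·, p) (·, σ p))ᵀ *ᵥ fun j => v (j, σ p)) i := by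
  simp [partialTransposeAlong, mulVec, dotProduct, Fintype.sum_prod_type]

lemma l2_opNorm_partialTransposeAlong_le [Fintype ι] [DecidableEq ι] [Fintype κ] [DecidableEq κ]
    (σ : Equiv.Perm κ) (X : Matrix (ι × κ) (ι × κ) 𝕜) : ‖partialTransposeAlong σ X‖ ≤ ‖X‖ := by
  refine l2_opNorm_le_of_sum_norm_sq_mulVec_le (norm_nonneg X) fun v => ?_
  have hblock (p : κ) : ‖(X.submatrix (·, p) (·, σ p))ᵀ‖ ≤ ‖X‖ := by
    rw [l2_opNorm_transpose]
    exact l2_opNorm_submatrix_le X (Prod.mk_left_injective p) (Prod.mk_left_injective (σ p))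
  calc ∑ ip, ‖(partialTransposeAlong σ X *ᵥ v) ip‖ ^ 2
      = ∑ p, ∑ i, ‖((X.submatrix (·, p) (·, σ p))ᵀ *ᵥ fun j => v (j, σ p)) i‖ ^ 2 := by
        rw [Fintype.sum_prod_type, Finset.sum_comm]
        simp only [partialTransposeAlong_mulVec]
    _ ≤ ∑ p, ‖X‖ ^ 2 * ∑ j, ‖v (j, σ p)‖ ^ 2 := by
        gcongr with p
        exact (sum_norm_sq_mulVec_le _ _).trans (by gcongr; exact hblock p)
    _ = ‖X‖ ^ 2 * ∑ jq, ‖v jq‖ ^ 2 := by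
        rw [← Finset.mul_sum, Fintype.sum_prod_type_right,
          Equiv.sum_comp σ fun q => ∑ j, ‖v (j, q)‖ ^ 2]

lemma sum_partialTransposeAlong_addRight [Semiring R] [Fintype κ] [DecidableEq κ] [AddGroup κ]
    (X : Matrix (ι × κ) (ι × κ) R) :
    ∑ d, partialTransposeAlong (Equiv.addRight d) X = partialTranspose X := by
  ext ⟨i, p⟩ ⟨j, q⟩
  have hshift (d : κ) : q = p + d ↔ -p + q = d := neg_add_eq_iff_eq_add.symm
  simp [partialTransposeAlong, sum_apply, hshift]

lemma l2_opNorm_partialTranspose_le [Fintype ι] [DecidableEq ι] [Fintype κ] [DecidableEq κ]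
    [AddGroup κ] (X : Matrix (ι × κ) (ι × κ) 𝕜) :
    ‖partialTranspose X‖ ≤ Fintype.card κ * ‖X‖ :=
  calc ‖partialTranspose X‖ = ‖∑ d, partialTransposeAlong (Equiv.addRight d) X‖ := by
        rw [sum_partialTransposeAlong_addRight]
    _ ≤ ∑ d : κ, ‖partialTransposeAlong (Equiv.addRight d) X‖ := norm_sum_le _ _
    _ ≤ ∑ _d : κ, ‖X‖ := Finset.sum_le_sum fun d _ => l2_opNorm_partialTransposeAlong_le _ X
    _ = Fintype.card κ * ‖X‖ := by simp

lemma partialTranspose_submatrix_prodComm [Semiring R] [DecidableEq ι] :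
    partialTranspose ((1 : Matrix (ι × ι) (ι × ι) R).submatrix id (Equiv.prodComm ι ι)) =
      vecMulVec (vec 1) (vec 1) := by
  ext ⟨i, p⟩ ⟨j, q⟩
  simp [one_apply, vecMulVec_apply, vec, ite_and, eq_comm]

lemma card_le_l2_opNorm_partialTranspose_submatrix_prodComm [Fintype ι] [DecidableEq ι]
    [Nonempty ι] :
    (Fintype.card ι : ℝ) ≤
      ‖partialTranspose ((1 : Matrix (ι × ι) (ι × ι) 𝕜).submatrix id (Equiv.prodComm ι ι))‖ := by
  set ω : ι × ι → 𝕜 := vec 1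
  have hω : ω ≠ 0 := by
    obtain ⟨i⟩ := ‹Nonempty ι›
    exact Function.ne_iff.mpr ⟨(i, i), by simp [ω]⟩
  have hωω : ω ⬝ᵥ ω = Fintype.card ι := by
    simp [ω, vec, dotProduct, Fintype.sum_prod_type, one_apply]
  have heigen : vecMulVec ω ω *ᵥ ω = (Fintype.card ι : 𝕜) • ω := by
    rw [vecMulVec_mulVec, hωω, op_smul_eq_smul]
  rw [partialTranspose_submatrix_prodComm]
  simpa using norm_le_l2_opNorm_of_mulVec_eq_smul hω heigen

end PartialTranspose

end Matrix

section Amplification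

variable {n k : ℕ}

lemma isAmplification_smul_partialTranspose (c : ℂ) :
    IsAmplification (c • transposeLM n) k (c • partialTranspose) := fun A B => by
  simp [partialTranspose_kronecker, transposeLM, smul_kronecker]

lemma IsAmplification.eq_smul_partialTranspose {c : ℂ}
    {T : Matrix (Fin n × Fin k) (Fin n × Fin k) ℂ →ₗ[ℂ] Matrix (Fin n × Fin k) (Fin n × Fin k) ℂ}
    (hT : IsAmplification (c • transposeLM n) k T) :
    T = c • partialTranspose :=
  linearMap_ext_kronecker fun A B => by rw [hT, isAmplification_smul_partialTranspose]

lemma kContractiveMat_smul_transposeLM_iff (c : ℂ) :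
    KContractiveMat k (c • transposeLM n) ↔
      ∀ X : Matrix (Fin n × Fin k) (Fin n × Fin k) ℂ, ‖c‖ * ‖partialTranspose X‖ ≤ ‖X‖ := by
  refine ⟨fun h X => ?_, fun h T hT X => ?_⟩
  · simpa [norm_smul] using h _ (isAmplification_smul_partialTranspose c) X
  · rw [hT.eq_smul_partialTranspose, LinearMap.smul_apply, norm_smul]
    exact h X

end Amplification

/-- For `n ≥ 2`, the rescaled transpose map `(1/(n-1))·τₙ : Mₙ(ℂ) → Mₙ(ℂ)`
is `(n-1)`-contractive but not `n`-contractive. -/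
theorem stmt1 (n : ℕ) (hn : 2 ≤ n) :
    KContractiveMat (n - 1) ((1 / ((n : ℂ) - 1)) • transposeLM n) ∧
      ¬ KContractiveMat n ((1 / ((n : ℂ) - 1)) • transposeLM n) := by
  have hn1 : (0 : ℝ) < n - 1 := sub_pos.mpr (Nat.one_lt_cast.mpr hn)
  have hc : ‖1 / ((n : ℂ) - 1)‖ = 1 / ((n : ℝ) - 1) := by
    rw [show (n : ℂ) - 1 = ((n - 1 : ℝ) : ℂ) by push_cast; ring, norm_div, norm_one,
      Complex.norm_of_nonneg hn1.le]
  rw [kContractiveMat_smul_transposeLM_iff, kContractiveMat_smul_transposeLM_iff, hc]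
  constructor
  · intro X
    have : NeZero (n - 1) := ⟨by omega⟩
    have hPT : ‖partialTranspose X‖ ≤ ((n : ℝ) - 1) * ‖X‖ := by
      simpa [Nat.cast_sub (by omega : 1 ≤ n)] using l2_opNorm_partialTranspose_le X
    calc 1 / ((n : ℝ) - 1) * ‖partialTranspose X‖
        ≤ 1 / ((n : ℝ) - 1) * (((n : ℝ) - 1) * ‖X‖) := by gcongr
      _ = ‖X‖ := by field_simp
  · intro h
    have : Nonempty (Fin n) := ⟨⟨0, by omega⟩⟩
    set W := (1 : Matrix (Fin n × Fin n) (Fin n × Fin n) ℂ).submatrix id (Equiv.prodComm _ _)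
    have hW : ‖W‖ ≤ 1 :=
      (l2_opNorm_submatrix_le 1 Function.injective_id (Equiv.injective _)).trans l2_opNorm_one_le
    have hPW : (n : ℝ) ≤ ‖partialTranspose W‖ := by
      simpa only [Fintype.card_fin] using
        card_le_l2_opNorm_partialTranspose_submatrix_prodComm (ι := Fin n) (𝕜 := ℂ)
    have hle : 1 / ((n : ℝ) - 1) * n ≤ 1 :=
      calc 1 / ((n : ℝ) - 1) * n ≤ 1 / ((n : ℝ) - 1) * ‖partialTranspose W‖ := by gcongr
        _ ≤ ‖W‖ := h W
        _ ≤ 1 := hW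
    rw [one_div_mul_eq_div, div_le_one hn1] at hle
    linarith
end
end

section
/- Let A be a unital C*-algebra and suppose the canonical anti-homomorphism ι : A → A^op (the identity on underlying sets, reversing multiplication) is completely positive (equivalently 3-positive suffices). Then A is abelian. -/
noncomputable section

/-- An element of a `*`-ring is positive if it is of the form `star b * b`.
(In a C*-algebra this is the usual positivity.) -/
def IsPosElem {A : Type*} [NonUnitalSemiring A] [StarRing A] (a : A) : Prop :=
  ∃ b, a = star b * b

/-- A linear map `φ : A → B` between `*`-algebras is `k`-positive if
`φ ⊗ id_{M_k} : M_k(A) → M_k(B)` (i.e. the entrywise application of `φ`)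
maps positive elements to positive elements. -/
def KPositive {A B : Type*} [NonUnitalRing A] [StarRing A] [Module ℂ A]
    [NonUnitalRing B] [StarRing B] [Module ℂ B] (k : ℕ) (φ : A →ₗ[ℂ] B) : Prop :=
  ∀ x : Matrix (Fin k) (Fin k) A, IsPosElem x → IsPosElem (x.map φ)

/-- A linear map is completely positive if it is `k`-positive for all `k`. -/
def CompletelyPositive {A B : Type*} [NonUnitalRing A] [StarRing A] [Module ℂ A]
    [NonUnitalRing B] [StarRing B] [Module ℂ B] (φ : A →ₗ[ℂ] B) : Prop :=
  ∀ k : ℕ, KPositive k φ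

/-!
Apply `3`-positivity of `a ↦ op a` to the positive matrix `star b * b`, where `b` has first row
`(1, a, 0)` and zeros elsewhere. Reading the resulting factorisation back in `A` (where products
are reversed) writes the entries `1, a, star a, star a * a` as sums `∑ l, d l j * star (d l i)`,
and then `star a * a - a * star a = ∑ l, w l * star (w l)` with `w l = d l 1 - a * d l 0`.
So `a * star a ≤ star a * a` for every `a`; applied to `star a` as well, every element is normal.
Finally, normality of `u + I • v` for self-adjoint `u, v` says exactly that `u` and `v` commute.
-/

open MulOpposite ComplexStarModule

section

variable {A : Type*} {k : ℕ}

lemma KPositive.exists_sum_star_mul_eq_sum_mul_star [NonUnitalRing A] [StarRing A] [Module ℂ A]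
    (h : KPositive k (opLinearEquiv ℂ (M := A)).toLinearMap) (b : Matrix (Fin k) (Fin k) A) :
    ∃ d : Fin k → Fin k → A,
      ∀ i j, ∑ l, star (b l i) * b l j = ∑ l, d l j * star (d l i) := by
  obtain ⟨c, hc⟩ := h (star b * b) ⟨b, rfl⟩
  refine ⟨fun l i => unop (c l i), fun i j => ?_⟩
  simpa [Matrix.mul_apply, Finset.unop_sum] using congrArg unop (congrFun (congrFun hc i) j)

lemma KPositive.exists_star_mul_self_sub_mul_star_eq_sum [Ring A] [StarRing A] [Module ℂ A]
    (h : KPositive k (opLinearEquiv ℂ (M := A)).toLinearMap) {p q : Fin k} (hpq : p ≠ q)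
    (a : A) : ∃ w : Fin k → A, star a * a - a * star a = ∑ l, w l * star (w l) := by
  obtain ⟨d, hd⟩ :=
    h.exists_sum_star_mul_eq_sum_mul_star (Matrix.single p p 1 + Matrix.single p q a)
  have hpp : 1 = ∑ l, d l p * star (d l p) := by
    simpa [Matrix.single_apply, hpq, hpq.symm] using hd p p
  have hpq' : a = ∑ l, d l q * star (d l p) := by
    simpa [Matrix.single_apply, hpq, hpq.symm] using hd p q
  have hqp : star a = ∑ l, d l p * star (d l q) := by
    simpa [Matrix.single_apply, hpq, hpq.symm] using hd q p
  have hqq : star a * a = ∑ l, d l q * star (d l q) := by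
    simpa [Matrix.single_apply, hpq, hpq.symm] using hd q q
  refine ⟨fun l => d l q - a * d l p, ?_⟩
  calc star a * a - a * star a
      = ∑ l, d l q * star (d l q) - (∑ l, d l q * star (d l p)) * star a
        - a * ∑ l, d l p * star (d l q) + a * (∑ l, d l p * star (d l p)) * star a := by
        rw [← hpp, ← hpq', ← hqp, ← hqq]; noncomm_ring
    _ = ∑ l, (d l q - a * d l p) * star (d l q - a * d l p) := by
        simp only [Finset.mul_sum, Finset.sum_mul, ← Finset.sum_sub_distrib,
          ← Finset.sum_add_distrib]
        exact Finset.sum_congr rfl fun l _ => by simp only [star_sub, star_mul]; noncomm_ring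

lemma KPositive.isStarNormal_of_op [CStarAlgebra A]
    (h : KPositive k (opLinearEquiv ℂ (M := A)).toLinearMap) {p q : Fin k} (hpq : p ≠ q)
    (a : A) : IsStarNormal a := by
  let := CStarAlgebra.spectralOrder A
  have := CStarAlgebra.spectralOrderedRing A
  have mul_star_le (b : A) : b * star b ≤ star b * b := by
    obtain ⟨w, hw⟩ := h.exists_star_mul_self_sub_mul_star_eq_sum hpq b
    exact sub_nonneg.mp (hw ▸ Finset.sum_nonneg fun l _ => mul_star_self_nonneg (w l))
  have star_mul_le : star a * a ≤ a * star a := by simpa using mul_star_le (star a)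
  exact ⟨le_antisymm star_mul_le (mul_star_le a)⟩

lemma commute_of_forall_isStarNormal [NonUnitalRing A] [StarRing A] [Module ℂ A]
    [IsScalarTower ℂ A A] [SMulCommClass ℂ A A] [StarModule ℂ A]
    (h : ∀ a : A, IsStarNormal a) (x y : A) : Commute x y := by
  have hsa (u v : selfAdjoint A) : Commute (u : A) v := by
    simpa [realPart_I_smul, imaginaryPart_I_smul] using
      isStarNormal_iff_commute_realPart_imaginaryPart.mp (h (u + Complex.I • v))
  rw [← realPart_add_I_smul_imaginaryPart x, ← realPart_add_I_smul_imaginaryPart y]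
  have hℜ := (hsa (ℜ x) (ℜ y)).add_right ((hsa (ℜ x) (ℑ y)).smul_right Complex.I)
  have hℑ := (hsa (ℑ x) (ℜ y)).add_right ((hsa (ℑ x) (ℑ y)).smul_right Complex.I)
  exact hℜ.add_left (hℑ.smul_left Complex.I)

end

/-- Let `A` be a unital C*-algebra and suppose the canonical
anti-homomorphism `ι : A → A^op` (the identity map into the opposite algebra) is
completely positive — equivalently (and as assumed here, sufficiently) `3`-positive.
Then `A` is abelian. -/
theorem stmt18 (A : Type) [CStarAlgebra A]
    (h : KPositive 3 ((MulOpposite.opLinearEquiv ℂ (M := A)).toLinearMap)) :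
    ∀ x y : A, x * y = y * x := by
  have normal : ∀ a : A, IsStarNormal a := h.isStarNormal_of_op (p := 0) (q := 1) (by decide)
  exact fun x y => (commute_of_forall_isStarNormal normal x y).eq

end
end
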